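/- arXiv:2007.15595 — 6 statements merged into one kernel-verified Lean document; each statement's English description precedes it below -/
import Mathlib

section
/- Fix n ∈ ℕ and let S be a candidate boundary for F_n that contains an element with first coordinate equal to 2. Then (n, S) is one of the following: (2, {(2,4)}); (1, {(2,3)}); (1, {(2,2),(0,1)}); (1, {(2,2)}); (0, {(2,2)}); (0, {(2,1),(0,1)}); (0, {(2,1)}), where S is regarded as a multiset. -/
/-- A pair `(a,b) ∈ ℕ × ℕ` models the class `aZ_n + bF` of an irreducible
smooth curve on the Hirzebruch surface `F_n`: it is `(0,1)`, `(1,0)`, or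
satisfies `a ≥ 1`, `b ≥ 1`, `b ≥ n·a`. -/
def IsFnClass (n : ℕ) (p : ℕ × ℕ) : Prop :=
  p = (0, 1) ∨ p = (1, 0) ∨ (1 ≤ p.1 ∧ 1 ≤ p.2 ∧ n * p.1 ≤ p.2)

/-- A nonempty finite multiset `S` of `F_n`-classes is a candidate boundary if
(i) the sum of first coordinates is `≤ 2`; (ii) the sum of second coordinates
is `≤ n+2`; (iii) if `n ≥ 1` then `(1,0)` occurs at most once; (iv) if some
element has first coordinate `≥ 1` then `(0,1)` occurs at most twice. -/
def IsCandidateBoundary (n : ℕ) (S : Multiset (ℕ × ℕ)) : Prop :=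
  S ≠ 0 ∧ (∀ p ∈ S, IsFnClass n p) ∧
    (S.map Prod.fst).sum ≤ 2 ∧ (S.map Prod.snd).sum ≤ n + 2 ∧
    (1 ≤ n → S.count (1, 0) ≤ 1) ∧
    ((∃ p ∈ S, 1 ≤ p.1) → S.count (0, 1) ≤ 2)

/-- Case (5.1): candidate boundaries containing a class with `a = 2`. -/
theorem stmt_9 (n : ℕ) (S : Multiset (ℕ × ℕ))
    (hS : IsCandidateBoundary n S) (h2 : ∃ p ∈ S, p.1 = 2) :
    (n = 2 ∧ S = {(2, 4)}) ∨ (n = 1 ∧ S = {(2, 3)}) ∨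
    (n = 1 ∧ S = {(2, 2), (0, 1)}) ∨ (n = 1 ∧ S = {(2, 2)}) ∨
    (n = 0 ∧ S = {(2, 2)}) ∨ (n = 0 ∧ S = {(2, 1), (0, 1)}) ∨
    (n = 0 ∧ S = {(2, 1)}) := by
  obtain ⟨p, hp, hpa⟩ := h2
  obtain ⟨-, hcls, hf, hs, -, hiv⟩ := hS
  obtain ⟨a, b⟩ := p
  simp only at hpa
  subst hpa
  obtain ⟨T, rfl⟩ : ∃ T, S = (2, b) ::ₘ T := ⟨S.erase (2, b), (Multiset.cons_erase hp).symm⟩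
  -- every element of T is (0,1)
  have hT : ∀ q ∈ T, q = ((0 : ℕ), (1 : ℕ)) := by
    intro q hq
    have h1 : q.1 = 0 := by
      have := Multiset.le_sum_of_mem (Multiset.mem_map_of_mem Prod.fst hq)
      simp only [Multiset.map_cons, Multiset.sum_cons] at hf
      omega
    rcases hcls q (Multiset.mem_cons_of_mem hq) with h | h | h
    · exact h
    · rw [h] at h1; simp at h1
    · omega
  have hrep : T = Multiset.replicate T.card ((0:ℕ), (1:ℕ)) :=
    (Multiset.eq_replicate_card).2 hT
  set k := T.card with hk
  rw [hrep] at hf hs hiv ⊢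
  -- class conditions on (2,b)
  rcases hcls (2, b) (Multiset.mem_cons_self _ _) with h | h | h
  · simp at h
  · simp at h
  · obtain ⟨-, hb1, hnb⟩ := h
    simp only at hb1 hnb
    -- sums
    simp only [Multiset.map_cons, Multiset.sum_cons, Multiset.map_replicate,
      Multiset.sum_replicate, smul_eq_mul] at hf hs
    have hk2 : k ≤ 2 := by
      have := hiv ⟨(2, b), Multiset.mem_cons_self _ _, by norm_num⟩
      rwa [Multiset.count_cons_of_ne (by simp), Multiset.count_replicate_self] at this
    have hn2 : n ≤ 2 := by omega
    have hb4 : b ≤ 4 := by omega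
    clear hT hrep
    interval_cases n <;> interval_cases k <;> interval_cases b <;>
      first
        | (exfalso; omega)
        | simp [Multiset.replicate_succ]
end

section
/- Fix n ∈ ℕ and let S be a candidate boundary for F_n such that every element of S has first coordinate at most 1 and at least two elements of S (counted with multiplicity) have both coordinates ≥ 1. Then (n, S) is one of the following: (2, {(1,2),(1,2)}); (1, {(1,2),(1,1)}); (1, {(1,1),(1,1),(0,1)}); (1, {(1,1),(1,1)}); (0, {(1,1),(1,1)}), where S is regarded as a multiset. -/
/-- Case (5.2): candidate boundaries with all `a ≤ 1` and at least two
elements with both coordinates `≥ 1`. -/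
theorem stmt_10 (n : ℕ) (S : Multiset (ℕ × ℕ))
    (hS : IsCandidateBoundary n S) (h1 : ∀ p ∈ S, p.1 ≤ 1)
    (h2 : 2 ≤ (S.filter (fun p => 1 ≤ p.1 ∧ 1 ≤ p.2)).card) :
    (n = 2 ∧ S = {(1, 2), (1, 2)}) ∨ (n = 1 ∧ S = {(1, 2), (1, 1)}) ∨
    (n = 1 ∧ S = {(1, 1), (1, 1), (0, 1)}) ∨ (n = 1 ∧ S = {(1, 1), (1, 1)}) ∨
    (n = 0 ∧ S = {(1, 1), (1, 1)}) := by
  obtain ⟨hne, hcls, hfst, hsnd, hc10, hc01⟩ := hS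
  have hpos : 0 < (S.filter (fun p => 1 ≤ p.1 ∧ 1 ≤ p.2)).card := by omega
  rw [Multiset.card_pos_iff_exists_mem] at hpos
  obtain ⟨p, hpf⟩ := hpos
  have hpS := Multiset.mem_of_mem_filter hpf
  have hpP : 1 ≤ p.1 ∧ 1 ≤ p.2 := (Multiset.mem_filter.mp hpf).2
  obtain ⟨S₁, rfl⟩ := Multiset.exists_cons_of_mem hpS
  have h2' : 0 < (S₁.filter (fun p => 1 ≤ p.1 ∧ 1 ≤ p.2)).card := by
    simp only [Multiset.filter_cons, if_pos hpP, Multiset.card_cons, Multiset.singleton_add] at h2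
    omega
  rw [Multiset.card_pos_iff_exists_mem] at h2'
  obtain ⟨q, hqf⟩ := h2'
  have hqS := Multiset.mem_of_mem_filter hqf
  have hqP : 1 ≤ q.1 ∧ 1 ≤ q.2 := (Multiset.mem_filter.mp hqf).2
  obtain ⟨T, rfl⟩ := Multiset.exists_cons_of_mem hqS
  simp only [Multiset.map_cons, Multiset.sum_cons] at hfst hsnd
  have hp1 : p.1 = 1 := by
    have := h1 p (by simp); omega
  have hq1 : q.1 = 1 := by
    have := h1 q (by simp); omega
  have hT : ∀ r ∈ T, r = (0, 1) := by
    intro r hr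
    have har : r.1 = 0 := by
      by_contra h
      have h1r : 1 ≤ r.1 := Nat.one_le_iff_ne_zero.mpr h
      have hle : r.1 ≤ (T.map Prod.fst).sum :=
        Multiset.single_le_sum (fun x _ => Nat.zero_le x) _
          (Multiset.mem_map_of_mem _ hr)
      omega
    rcases hcls r (by simp [hr]) with h | h | h
    · exact h
    · exfalso; rw [h] at har; simp at har
    · exfalso; omega
  have hTrep : T = Multiset.replicate T.card (0, 1) :=
    Multiset.eq_replicate_card.mpr hT
  have hsum2 : p.2 + q.2 + T.card ≤ n + 2 := by
    rw [hTrep] at hsnd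
    simp [Multiset.map_replicate, Multiset.sum_replicate] at hsnd
    omega
  have hp0 : p ≠ (0, 1) := by
    intro h; rw [h] at hp1; simp at hp1
  have hq0 : q ≠ (0, 1) := by
    intro h; rw [h] at hq1; simp at hq1
  have hk : T.card ≤ 2 := by
    have hcnt := hc01 ⟨p, by simp, by omega⟩
    rw [Multiset.count_cons_of_ne (Ne.symm hp0), Multiset.count_cons_of_ne (Ne.symm hq0), hTrep,
      Multiset.count_replicate_self] at hcnt
    exact hcnt
  have hnp : n ≤ p.2 := by
    rcases hcls p (by simp) with h | h | h
    · exact absurd h hp0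
    · rw [h] at hpP; simp at hpP
    · rw [hp1, mul_one] at h; exact h.2.2
  have hnq : n ≤ q.2 := by
    rcases hcls q (by simp) with h | h | h
    · exact absurd h hq0
    · rw [h] at hqP; simp at hqP
    · rw [hq1, mul_one] at h; exact h.2.2
  obtain ⟨pa, pb⟩ := p
  obtain ⟨qa, qb⟩ := q
  simp only at hp1 hq1 hnp hnq hsum2 hpP hqP
  subst hp1 hq1
  have hcases : (n = 2 ∧ pb = 2 ∧ qb = 2 ∧ T.card = 0) ∨
      (n = 1 ∧ ((pb = 2 ∧ qb = 1) ∨ (pb = 1 ∧ qb = 2)) ∧ T.card = 0) ∨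
      (n = 1 ∧ pb = 1 ∧ qb = 1 ∧ T.card = 1) ∨
      (n = 1 ∧ pb = 1 ∧ qb = 1 ∧ T.card = 0) ∨
      (n = 0 ∧ pb = 1 ∧ qb = 1 ∧ T.card = 0) := by omega
  rcases hcases with ⟨hn, hb1, hb2, hc⟩ | ⟨hn, hb12 | hb12, hc⟩ |
      ⟨hn, hb1, hb2, hc⟩ | ⟨hn, hb1, hb2, hc⟩ | ⟨hn, hb1, hb2, hc⟩
  · subst hn hb1 hb2
    rw [hTrep, hc]
    exact Or.inl ⟨rfl, rfl⟩
  · obtain ⟨hb1, hb2⟩ := hb12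
    subst hn hb1 hb2
    rw [hTrep, hc]
    exact Or.inr (Or.inl ⟨rfl, rfl⟩)
  · obtain ⟨hb1, hb2⟩ := hb12
    subst hn hb1 hb2
    rw [hTrep, hc]
    exact Or.inr (Or.inl ⟨rfl, Multiset.cons_swap _ _ _⟩)
  · subst hn hb1 hb2
    rw [hTrep, hc]
    refine Or.inr (Or.inr (Or.inl ⟨rfl, ?_⟩))
    rfl
  · subst hn hb1 hb2
    rw [hTrep, hc]
    exact Or.inr (Or.inr (Or.inr (Or.inl ⟨rfl, rfl⟩)))
  · subst hn hb1 hb2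
    rw [hTrep, hc]
    exact Or.inr (Or.inr (Or.inr (Or.inr ⟨rfl, rfl⟩)))
end

section
/- Fix n ∈ ℕ and let S be a candidate boundary for F_n such that: every element of S has first coordinate at most 1; at most one element of S (counted with multiplicity) has both coordinates ≥ 1; at least one element of S has first coordinate equal to 1; and the maximum of b over all elements (1,b) of S equals n. Then S is one of the following multisets: {(1,n),(1,0),(0,1),(0,1)}; {(1,n),(1,0),(0,1)}; {(1,n),(1,0)}; {(1,n),(0,1),(0,1)}; {(1,n),(0,1)}; {(1,n)} (for n = 0 the elements (1,n) and (1,0) coincide). -/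
lemma eq_of_trichotomy {α : Type*} [DecidableEq α] (S T : Multiset α) (u v w : α)
    (hS : ∀ x ∈ S, x = u ∨ x = v ∨ x = w)
    (hT : ∀ x ∈ T, x = u ∨ x = v ∨ x = w)
    (hu : S.count u = T.count u) (hv : S.count v = T.count v)
    (hw : S.count w = T.count w) : S = T := by
  rw [Multiset.ext]
  intro x
  by_cases h : x = u ∨ x = v ∨ x = w
  · rcases h with rfl | rfl | rfl <;> assumption
  · push_neg at h
    rw [Multiset.count_eq_zero_of_notMem, Multiset.count_eq_zero_of_notMem]
    · intro hx; rcases hT x hx with rfl | rfl | rfl <;> simp_all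
    · intro hx; rcases hS x hx with rfl | rfl | rfl <;> simp_all

lemma count_le_sum_fst (S : Multiset (ℕ × ℕ)) (b : ℕ) :
    S.count (1, b) ≤ (S.map Prod.fst).sum := by
  have hle : Multiset.replicate (S.count (1, b)) (1, b) ≤ S :=
    Multiset.le_count_iff_replicate_le.mp le_rfl
  obtain ⟨u, hu⟩ := Multiset.le_iff_exists_add.mp (Multiset.map_le_map (f := Prod.fst) hle)
  rw [hu, Multiset.sum_add]
  simp [Multiset.map_replicate, Multiset.sum_replicate]

/-- Case (5.3): candidate boundaries with all `a ≤ 1`, at most one element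
with both coordinates `≥ 1`, some element with `a = 1`, and the maximum of
`b` over the elements `(1,b)` equal to `n`. -/
theorem stmt_11 (n : ℕ) (S : Multiset (ℕ × ℕ))
    (hS : IsCandidateBoundary n S) (h1 : ∀ p ∈ S, p.1 ≤ 1)
    (h2 : (S.filter (fun p => 1 ≤ p.1 ∧ 1 ≤ p.2)).card ≤ 1)
    (h3 : ∃ p ∈ S, p.1 = 1)
    (hmax : ∀ p ∈ S, p.1 = 1 → p.2 ≤ n) (hmem : (1, n) ∈ S) :
    S = {(1, n), (1, 0), (0, 1), (0, 1)} ∨ S = {(1, n), (1, 0), (0, 1)} ∨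
    S = {(1, n), (1, 0)} ∨ S = {(1, n), (0, 1), (0, 1)} ∨
    S = {(1, n), (0, 1)} ∨ S = {(1, n)} := by
  obtain ⟨-, hcls, hfst, -, h10, h01⟩ := hS
  have hclass : ∀ p ∈ S, p = (0, 1) ∨ p = (1, 0) ∨ p = (1, n) := by
    intro p hp
    rcases hcls p hp with h | h | ⟨ha, hb, hn'⟩
    · exact Or.inl h
    · exact Or.inr (Or.inl h)
    · obtain ⟨x, y⟩ := p
      have hx : x = 1 := le_antisymm (h1 _ hp) ha
      have hy := hmax _ hp (by simpa using hx)
      simp only at hy hn' ha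
      right; right
      simp only [Prod.mk.injEq]
      constructor
      · exact hx
      · subst hx; omega
  have ha2 : S.count (0, 1) ≤ 2 := h01 ⟨(1, n), hmem, by simp⟩
  rcases Nat.eq_zero_or_pos n with rfl | hn
  · have hb1 : 1 ≤ S.count (1, 0) := Multiset.one_le_count_iff_mem.mpr hmem
    have hb2 : S.count (1, 0) ≤ 2 := le_trans (count_le_sum_fst S 0) hfst
    have hclass0 : ∀ p ∈ S, p = (0, 1) ∨ p = (1, 0) ∨ p = (1, 0) := by
      intro p hp; rcases hclass p hp with h | h | h <;> simp [h]
    have hb : S.count (1, 0) = 1 ∨ S.count (1, 0) = 2 := by omega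
    have ha : S.count (0, 1) = 0 ∨ S.count (0, 1) = 1 ∨ S.count (0, 1) = 2 := by omega
    rcases hb with hb | hb <;> rcases ha with ha | ha | ha
    · right; right; right; right; right
      exact eq_of_trichotomy S _ (0,1) (1,0) (1,0) hclass0 (by decide)
        (by rw [ha]; decide) (by rw [hb]; decide) (by rw [hb]; decide)
    · right; right; right; right; left
      exact eq_of_trichotomy S _ (0,1) (1,0) (1,0) hclass0 (by decide)
        (by rw [ha]; decide) (by rw [hb]; decide) (by rw [hb]; decide)
    · right; right; right; left
      exact eq_of_trichotomy S _ (0,1) (1,0) (1,0) hclass0 (by decide)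
        (by rw [ha]; decide) (by rw [hb]; decide) (by rw [hb]; decide)
    · right; right; left
      exact eq_of_trichotomy S _ (0,1) (1,0) (1,0) hclass0 (by decide)
        (by rw [ha]; decide) (by rw [hb]; decide) (by rw [hb]; decide)
    · right; left
      exact eq_of_trichotomy S _ (0,1) (1,0) (1,0) hclass0 (by decide)
        (by rw [ha]; decide) (by rw [hb]; decide) (by rw [hb]; decide)
    · left
      exact eq_of_trichotomy S _ (0,1) (1,0) (1,0) hclass0 (by decide)
        (by rw [ha]; decide) (by rw [hb]; decide) (by rw [hb]; decide)
  · have hne1 : ((1:ℕ), n) ≠ ((1:ℕ), 0) := by simp; omega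
    have hne2 : ((1:ℕ), n) ≠ ((0:ℕ), 1) := by simp
    have hc1 : S.count (1, n) ≤ 1 := by
      have h := Multiset.count_le_card ((1:ℕ), n) (S.filter (fun p => 1 ≤ p.1 ∧ 1 ≤ p.2))
      rw [Multiset.count_filter_of_pos (by simp; omega)] at h
      exact le_trans h h2
    have hc : S.count (1, n) = 1 :=
      le_antisymm hc1 (Multiset.one_le_count_iff_mem.mpr hmem)
    have hb1 : S.count (1, 0) ≤ 1 := h10 hn
    have hcT : ∀ T : Multiset (ℕ × ℕ), True := fun _ => trivial
    have ha : S.count (0, 1) = 0 ∨ S.count (0, 1) = 1 ∨ S.count (0, 1) = 2 := by omega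
    have hb : S.count (1, 0) = 0 ∨ S.count (1, 0) = 1 := by omega
    have hTmem : ∀ T ∈ ([{((1:ℕ), n), (1, 0), (0, 1), (0, 1)}, {(1, n), (1, 0), (0, 1)},
        {(1, n), (1, 0)}, {(1, n), (0, 1), (0, 1)}, {(1, n), (0, 1)}, ({(1, n)} : Multiset (ℕ × ℕ))] : List (Multiset (ℕ × ℕ))),
        ∀ x ∈ T, x = ((0:ℕ), (1:ℕ)) ∨ x = (1, 0) ∨ x = (1, n) := by
      intro T hT x hx
      fin_cases hT <;> simp_all <;> tauto
    rcases hb with hb | hb <;> rcases ha with ha | ha | ha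
    · right; right; right; right; right
      refine eq_of_trichotomy S _ (0,1) (1,0) (1,n) hclass (hTmem _ (by simp)) ?_ ?_ ?_ <;>
        simp [Multiset.count_cons, Multiset.count_singleton, Prod.ext_iff, ha, hb, hc, hn.ne] <;> omega
    · right; right; right; right; left
      refine eq_of_trichotomy S _ (0,1) (1,0) (1,n) hclass (hTmem _ (by simp)) ?_ ?_ ?_ <;>
        simp [Multiset.count_cons, Multiset.count_singleton, Prod.ext_iff, ha, hb, hc, hn.ne] <;> omega
    · right; right; right; left
      refine eq_of_trichotomy S _ (0,1) (1,0) (1,n) hclass (hTmem _ (by simp)) ?_ ?_ ?_ <;>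
        simp [Multiset.count_cons, Multiset.count_singleton, Prod.ext_iff, ha, hb, hc, hn.ne] <;> omega
    · right; right; left
      refine eq_of_trichotomy S _ (0,1) (1,0) (1,n) hclass (hTmem _ (by simp)) ?_ ?_ ?_ <;>
        simp [Multiset.count_cons, Multiset.count_singleton, Prod.ext_iff, ha, hb, hc, hn.ne] <;> omega
    · right; left
      refine eq_of_trichotomy S _ (0,1) (1,0) (1,n) hclass (hTmem _ (by simp)) ?_ ?_ ?_ <;>
        simp [Multiset.count_cons, Multiset.count_singleton, Prod.ext_iff, ha, hb, hc, hn.ne] <;> omega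
    · left
      refine eq_of_trichotomy S _ (0,1) (1,0) (1,n) hclass (hTmem _ (by simp)) ?_ ?_ ?_ <;>
        simp [Multiset.count_cons, Multiset.count_singleton, Prod.ext_iff, ha, hb, hc, hn.ne] <;> omega
end

section
/- Fix n ∈ ℕ and let S be a candidate boundary for F_n such that: every element of S has first coordinate at most 1; at most one element of S (counted with multiplicity) has both coordinates ≥ 1; at least one element of S has first coordinate equal to 1; and the maximum of b over all elements (1,b) of S equals n+1. Then S is one of the following multisets: {(1,n+1),(1,0),(0,1)}; {(1,n+1),(1,0)}; {(1,n+1),(0,1)}; {(1,n+1)}. -/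
/-- Case (5.4): as in case (5.3) but with the maximum of `b` over the
elements `(1,b)` equal to `n+1`. -/
theorem stmt_12 (n : ℕ) (S : Multiset (ℕ × ℕ))
    (hS : IsCandidateBoundary n S) (h1 : ∀ p ∈ S, p.1 ≤ 1)
    (h2 : (S.filter (fun p => 1 ≤ p.1 ∧ 1 ≤ p.2)).card ≤ 1)
    (h3 : ∃ p ∈ S, p.1 = 1)
    (hmax : ∀ p ∈ S, p.1 = 1 → p.2 ≤ n + 1) (hmem : (1, n + 1) ∈ S) :
    S = {(1, n + 1), (1, 0), (0, 1)} ∨ S = {(1, n + 1), (1, 0)} ∨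
    S = {(1, n + 1), (0, 1)} ∨ S = {(1, n + 1)} := by
  obtain ⟨T, rfl⟩ := Multiset.exists_cons_of_mem hmem
  obtain ⟨-, hcls, hfst, hsnd, -, -⟩ := hS
  -- no element of T has both coordinates ≥ 1
  have hfil : ∀ q ∈ T, ¬ (1 ≤ q.1 ∧ 1 ≤ q.2) := by
    intro q hq hq2
    have : (1:ℕ) + (T.filter (fun p => 1 ≤ p.1 ∧ 1 ≤ p.2)).card ≤ 1 := by
      simpa using h2
    have hcard : (T.filter (fun p => 1 ≤ p.1 ∧ 1 ≤ p.2)).card = 0 := by omega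
    have : q ∈ T.filter (fun p => 1 ≤ p.1 ∧ 1 ≤ p.2) :=
      Multiset.mem_filter.2 ⟨hq, hq2⟩
    rw [Multiset.card_eq_zero] at hcard
    simp [hcard] at this
  have hT : ∀ q ∈ T, q = (0, 1) ∨ q = (1, 0) := by
    intro q hq
    rcases hcls q (Multiset.mem_cons_of_mem hq) with h | h | ⟨ha, hb, -⟩
    · exact Or.inl h
    · exact Or.inr h
    · exact absurd ⟨ha, hb⟩ (hfil q hq)
  set c1 := T.count (0, 1) with hc1
  set c0 := T.count (1, 0) with hc0
  have hrep : T = Multiset.replicate c1 (0, 1) + Multiset.replicate c0 (1, 0) := by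
    ext q
    by_cases h01 : q = (0, 1)
    · subst h01
      simp [Multiset.count_replicate, hc1]
    by_cases h10 : q = (1, 0)
    · subst h10
      simp [Multiset.count_replicate, hc0]
    · have : q ∉ T := fun hq => by rcases hT q hq with h | h <;> simp_all
      simp [Multiset.count_replicate, Ne.symm h01, Ne.symm h10,
        Multiset.count_eq_zero.2 this]
  have hc0le : c0 ≤ 1 := by
    rw [hrep] at hfst
    simp [Multiset.map_replicate, Multiset.sum_replicate] at hfst
    omega
  have hc1le : c1 ≤ 1 := by
    rw [hrep] at hsnd
    simp [Multiset.map_replicate, Multiset.sum_replicate] at hsnd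
    omega
  rw [hrep]
  interval_cases c1 <;> interval_cases c0
  · right; right; right; simp
  · right; left; simp [Multiset.replicate_succ]
  · right; right; left; simp [Multiset.replicate_succ]
  · left
    show (1, n + 1) ::ₘ ({(0, 1)} + {(1, 0)}) = (1, n + 1) ::ₘ (1, 0) ::ₘ {(0, 1)}
    rw [Multiset.singleton_add]
    exact congrArg ((1, n + 1) ::ₘ ·) (Multiset.cons_swap (0, 1) (1, 0) 0)
end

section
/- Fix n ∈ ℕ and let S be a candidate boundary for F_n such that: every element of S has first coordinate at most 1; at most one element of S (counted with multiplicity) has both coordinates ≥ 1; at least one element of S has first coordinate equal to 1; and the maximum of b over all elements (1,b) of S equals n+2. Then S is one of the following multisets: {(1,n+2),(1,0)}; {(1,n+2)}. -/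
/-- Case (5.5): as in case (5.3) but with the maximum of `b` over the
elements `(1,b)` equal to `n+2`. -/
theorem stmt_13 (n : ℕ) (S : Multiset (ℕ × ℕ))
    (hS : IsCandidateBoundary n S) (h1 : ∀ p ∈ S, p.1 ≤ 1)
    (h2 : (S.filter (fun p => 1 ≤ p.1 ∧ 1 ≤ p.2)).card ≤ 1)
    (h3 : ∃ p ∈ S, p.1 = 1)
    (hmax : ∀ p ∈ S, p.1 = 1 → p.2 ≤ n + 2) (hmem : (1, n + 2) ∈ S) :
    S = {(1, n + 2), (1, 0)} ∨ S = {(1, n + 2)} := by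
  obtain ⟨-, hcls, hfst, hsnd, -, -⟩ := hS
  set T := S.erase (1, n + 2) with hT
  have hcons : (1, n + 2) ::ₘ T = S := Multiset.cons_erase hmem
  have hTmem : ∀ p ∈ T, p ∈ S := fun p hp => Multiset.mem_of_mem_erase hp
  have hsnd' : (T.map Prod.snd).sum = 0 := by
    have : ((((1, n + 2) : ℕ × ℕ) ::ₘ T).map Prod.snd).sum ≤ n + 2 := by
      rw [hcons]; exact hsnd
    simp only [Multiset.map_cons, Multiset.sum_cons] at this
    omega
  have hT10 : ∀ p ∈ T, p = ((1, 0) : ℕ × ℕ) := by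
    intro p hp
    have hp0 : p.2 = 0 := by
      have := Multiset.sum_eq_zero_iff.mp hsnd' p.2 (Multiset.mem_map_of_mem _ hp)
      exact this
    rcases hcls p (hTmem p hp) with h | h | ⟨_, h2', _⟩
    · rw [h] at hp0; exact absurd hp0 (by norm_num)
    · exact h
    · omega
  have hcard : T.card ≤ 1 := by
    have : ((((1, n + 2) : ℕ × ℕ) ::ₘ T).map Prod.fst).sum ≤ 2 := by
      rw [hcons]; exact hfst
    simp only [Multiset.map_cons, Multiset.sum_cons] at this
    have hle : T.card ≤ (T.map Prod.fst).sum := by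
      have : ∀ x ∈ T.map Prod.fst, 1 ≤ x := by
        intro x hx
        obtain ⟨p, hp, rfl⟩ := Multiset.mem_map.mp hx
        rw [hT10 p hp]
      calc T.card = (T.map Prod.fst).card := (Multiset.card_map _ _).symm
        _ ≤ (T.map Prod.fst).sum := by
          have := Multiset.card_nsmul_le_sum this
          simpa using this
    omega
  interval_cases h : T.card
  · right
    have : T = 0 := Multiset.card_eq_zero.mp h
    rw [← hcons, this]; rfl
  · left
    obtain ⟨a, ha⟩ := Multiset.card_eq_one.mp h
    have : a = (1, 0) := hT10 a (by rw [ha]; simp)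
    rw [← hcons, ha, this]
    rfl
end

section
/- Fix n ∈ ℕ and let S be a nonempty finite multiset of F_n-classes such that Σ_{(a,b)∈S} a ≤ 1 and, over the integers, Σ_{(a,b)∈S} b + n·(2 − Σ_{(a,b)∈S} a) < n + 2. Then (n, S) is one of the following: (n, {(1,0)}) for arbitrary n; (n, {(1,0),(0,1)}) for arbitrary n; (1, {(1,1)}); (0, {(1,1)}); (0, {(0,1)}). -/
/-- The Hirzebruch-surface case of Maeda's classification: a nonempty multiset
`S` of `F_n`-classes with `Σa ≤ 1` and (over `ℤ`)
`Σb + n(2 − Σa) < n + 2` is one of five possibilities. -/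
theorem stmt_16 (n : ℕ) (S : Multiset (ℕ × ℕ)) (hS : S ≠ 0)
    (hcl : ∀ p ∈ S, IsFnClass n p)
    (ha : (S.map Prod.fst).sum ≤ 1)
    (hamp : ((S.map Prod.snd).sum : ℤ) +
        (n : ℤ) * (2 - ((S.map Prod.fst).sum : ℤ)) < (n : ℤ) + 2) :
    S = {(1, 0)} ∨ S = {(1, 0), (0, 1)} ∨ (n = 1 ∧ S = {(1, 1)}) ∨
    (n = 0 ∧ S = {(1, 1)}) ∨ (n = 0 ∧ S = {(0, 1)}) := by
  set A := (S.map Prod.fst).sum with hA'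
  set B := (S.map Prod.snd).sum with hB'
  have hB1 : B ≤ 1 := by
    have h2 : (1 : ℤ) ≤ 2 - (A : ℤ) := by
      have : (A : ℤ) ≤ 1 := by exact_mod_cast ha
      linarith
    have h3 : (n : ℤ) * 1 ≤ (n : ℤ) * (2 - (A : ℤ)) :=
      mul_le_mul_of_nonneg_left h2 (by positivity)
    have : (B : ℤ) < 2 := by linarith
    omega
  have hcard : S.card ≤ A + B := by
    have h1 : S.card = (S.map (fun _ => (1 : ℕ))).sum := by
      simp [Multiset.map_const']
    rw [h1]
    calc (S.map fun _ => (1 : ℕ)).sum ≤ (S.map fun p => p.1 + p.2).sum := by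
          apply Multiset.sum_map_le_sum_map
          intro p hp
          rcases hcl p hp with h | h | h
          · simp [h]
          · simp [h]
          · omega
      _ = A + B := by
          rw [hA', hB', ← Multiset.sum_map_add]
  have hcard1 : 1 ≤ S.card := Multiset.card_pos.mpr hS
  have hcard2 : S.card ≤ 2 := by omega
  interval_cases h : S.card
  · -- card = 1
    obtain ⟨p, hp⟩ := Multiset.card_eq_one.mp h
    subst hp
    have hA1 : A = p.1 := by simp [hA']
    have hB2 : B = p.2 := by simp [hB']
    rcases hcl p (by simp) with hc | hc | hc
    · -- p = (0,1)
      right; right; right; right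
      have hn : n = 0 := by
        rw [hc] at hA1 hB2
        simp at hA1 hB2
        rw [hA1, hB2] at hamp
        push_cast at hamp
        omega
      simp [hn, hc]
    · left; rw [hc]
    · -- a ≥ 1, b ≥ 1
      obtain ⟨h1, h2, h3⟩ := hc
      have ha1 : p.1 = 1 := by omega
      have hb1 : p.2 = 1 := by omega
      have hn : n ≤ 1 := by rw [ha1, hb1] at h3; omega
      have hp11 : p = (1, 1) := Prod.ext ha1 hb1
      interval_cases n
      · right; right; right; left; exact ⟨rfl, by rw [hp11]⟩
      · right; right; left; exact ⟨rfl, by rw [hp11]⟩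
  · -- card = 2
    obtain ⟨p, q, hpq⟩ := Multiset.card_eq_two.mp h
    subst hpq
    have hA1 : A = p.1 + q.1 := by simp [hA']
    have hB2 : B = p.2 + q.2 := by simp [hB']
    have hp : IsFnClass n p := hcl p (by simp)
    have hq : IsFnClass n q := hcl q (by simp)
    have hsum1 : p.1 + p.2 = 1 := by
      rcases hp with h' | h' | h' <;> rcases hq with h'' | h'' | h'' <;>
        simp_all <;> omega
    have hsum2 : q.1 + q.2 = 1 := by omega
    have hp' : p = (1, 0) ∨ p = (0, 1) := by
      rcases hp with h' | h' | h' <;> [right; left; skip]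
      · exact h'
      · exact h'
      · left; exact Prod.ext (by omega) (by omega)
    have hq' : q = (1, 0) ∨ q = (0, 1) := by
      rcases hq with h' | h' | h' <;> [right; left; skip]
      · exact h'
      · exact h'
      · left; exact Prod.ext (by omega) (by omega)
    rcases hp' with h1 | h1 <;> rcases hq' with h2 | h2
    · exfalso; rw [h1, h2] at hA1; omega
    · right; left; rw [h1, h2]
    · right; left; rw [h1, h2]; exact Multiset.pair_comm _ _
    · exfalso; rw [h1, h2] at hB2; omega
end
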